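/- arXiv:2511.19503 — 2 statements merged into one kernel-verified Lean document; each statement's English description precedes it below -/
import Mathlib

section
/- Let n > 1 be an integer that is not squarefree. Then there is a bijection between the set of divisors d of n with μ(d) = 1 and the set of divisors d' of n with μ(d') = -1 such that corresponding divisors satisfy rad(n/d) = rad(n/d'). -/
open ArithmeticFunction

open scoped ArithmeticFunction.Moebius

/-- The radical (squarefree kernel) of `n`: the product of the distinct primes dividing `n`. -/
def rad (n : ℕ) : ℕ := ∏ p ∈ n.primeFactors, p

/-!
Fix a prime `p` with `p² ∣ n`. Multiplying a squarefree divisor `d` of `n` by `p`, or dividing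
it by `p` when `p ∣ d`, is an involution on the squarefree divisors of `n` that flips the sign of
`μ`. Since `p` divides `d` at most once, `p` divides both `n / d` and the quotient by the image of
`d`; these differ by one factor `p`, so they have the same prime factors.
-/

lemma rad_div_of_prime_sq_dvd {p a : ℕ} (hp : p.Prime) (hpa : p * p ∣ a) :
    rad (a / p) = rad a := by
  obtain ⟨b, rfl⟩ := dvd_trans (dvd_mul_right p p) hpa
  rcases eq_or_ne b 0 with rfl | hb
  · simp
  have hpb : p ∣ b := (Nat.mul_dvd_mul_iff_left hp.pos).mp hpa
  rw [rad, rad, Nat.mul_div_cancel_left _ hp.pos, Nat.primeFactors_mul hp.ne_zero hb,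
    hp.primeFactors, Finset.union_eq_right.mpr]
  exact Finset.singleton_subset_iff.mpr (Nat.mem_primeFactors.mpr ⟨hp, hpb, hb⟩)

lemma rad_div_mul_prime {p n e : ℕ} (hp : p.Prime) (hpn : p * p ∣ n) (hen : e ∣ n)
    (hpe : ¬ p ∣ e) : rad (n / (e * p)) = rad (n / e) := by
  have hcop : Nat.Coprime p e := (hp.coprime_iff_not_dvd).mpr hpe
  have hpq : p * p ∣ n / e :=
    (Nat.dvd_div_iff_mul_dvd hen).mpr ((hcop.mul_left hcop).symm.mul_dvd_of_dvd_of_dvd hen hpn)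
  rw [← Nat.div_div_eq_div_mul, rad_div_of_prime_sq_dvd hp hpq]

def togglePrime (p d : ℕ) : ℕ := if p ∣ d then d / p else d * p

section togglePrime

variable {p d : ℕ}

lemma not_dvd_div_of_squarefree (hp : p.Prime) (hd : Squarefree d) (hpd : p ∣ d) :
    ¬ p ∣ d / p := by
  intro h
  obtain ⟨e, rfl⟩ := hpd
  rw [Nat.mul_div_cancel_left _ hp.pos] at h
  exact hp.not_isUnit (hd p (mul_dvd_mul_left p h))

lemma togglePrime_togglePrime (hp : p.Prime) (hd : Squarefree d) :
    togglePrime p (togglePrime p d) = d := by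
  by_cases hpd : p ∣ d
  · simp only [togglePrime, if_pos hpd, if_neg (not_dvd_div_of_squarefree hp hd hpd),
      Nat.div_mul_cancel hpd]
  · simp only [togglePrime, if_neg hpd, dvd_mul_left, if_true, Nat.mul_div_cancel _ hp.pos]

lemma moebius_mul_prime (hp : p.Prime) (hpd : ¬ p ∣ d) : μ (d * p) = -μ d := by
  rw [isMultiplicative_moebius.map_mul_of_coprime ((hp.coprime_iff_not_dvd).mpr hpd).symm,
    moebius_apply_prime hp, mul_neg_one]

lemma moebius_togglePrime (hp : p.Prime) (hd : Squarefree d) :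
    μ (togglePrime p d) = -μ d := by
  by_cases hpd : p ∣ d
  · rw [togglePrime, if_pos hpd]
    conv_rhs => rw [← Nat.div_mul_cancel hpd]
    rw [moebius_mul_prime hp (not_dvd_div_of_squarefree hp hd hpd), neg_neg]
  · rw [togglePrime, if_neg hpd, moebius_mul_prime hp hpd]

lemma togglePrime_dvd {n : ℕ} (hp : p.Prime) (hpn : p ∣ n) (hdn : d ∣ n) :
    togglePrime p d ∣ n := by
  by_cases hpd : p ∣ d
  · rw [togglePrime, if_pos hpd]
    exact (Nat.div_dvd_of_dvd hpd).trans hdn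
  · rw [togglePrime, if_neg hpd]
    exact ((hp.coprime_iff_not_dvd).mpr hpd).symm.mul_dvd_of_dvd_of_dvd hdn hpn

lemma rad_div_togglePrime {n : ℕ} (hp : p.Prime) (hpn : p * p ∣ n) (hd : Squarefree d)
    (hdn : d ∣ n) : rad (n / togglePrime p d) = rad (n / d) := by
  by_cases hpd : p ∣ d
  · rw [togglePrime, if_pos hpd]
    conv_rhs => rw [← Nat.div_mul_cancel hpd]
    exact (rad_div_mul_prime hp hpn ((Nat.div_dvd_of_dvd hpd).trans hdn)
      (not_dvd_div_of_squarefree hp hd hpd)).symm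
  · rw [togglePrime, if_neg hpd, rad_div_mul_prime hp hpn hdn hpd]

lemma togglePrime_mem_divisors_filter_moebius {n : ℕ} {k : ℤ} (hp : p.Prime) (hpn : p * p ∣ n)
    (hk : k ≠ 0) (hd : d ∈ n.divisors.filter (fun d => μ d = k)) :
    togglePrime p d ∈ n.divisors.filter (fun d => μ d = -k) := by
  simp only [Finset.mem_filter, Nat.mem_divisors] at hd ⊢
  obtain ⟨⟨hdn, hn⟩, hμ⟩ := hd
  have hsq : Squarefree d := moebius_ne_zero_iff_squarefree.mp (hμ ▸ hk)
  exact ⟨⟨togglePrime_dvd hp ((dvd_mul_right p p).trans hpn) hdn, hn⟩,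
    by rw [moebius_togglePrime hp hsq, hμ]⟩

end togglePrime

lemma squarefree_of_mem_divisors_filter_moebius {n d : ℕ} {k : ℤ} (hk : k ≠ 0)
    (hd : d ∈ n.divisors.filter (fun d => μ d = k)) : Squarefree d :=
  moebius_ne_zero_iff_squarefree.mp ((Finset.mem_filter.mp hd).2 ▸ hk)

theorem stmt8_general (n : ℕ) (h : ¬ Squarefree n) :
    ∃ f : ℕ → ℕ,
      Set.BijOn f ↑(n.divisors.filter (fun d => moebius d = 1))
        ↑(n.divisors.filter (fun d => moebius d = -1)) ∧
      ∀ d ∈ n.divisors.filter (fun d => moebius d = 1), rad (n / d) = rad (n / f d) := by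
  obtain ⟨p, hp, hpn⟩ : ∃ p, p.Prime ∧ p * p ∣ n := by
    by_contra! hc
    exact h (Nat.squarefree_iff_prime_squarefree.mpr hc)
  have hinv : Set.InvOn (togglePrime p) (togglePrime p)
      ↑(n.divisors.filter (fun d => μ d = 1)) ↑(n.divisors.filter (fun d => μ d = -1)) :=
    ⟨fun d hd => togglePrime_togglePrime hp
        (squarefree_of_mem_divisors_filter_moebius one_ne_zero hd),
      fun d hd => togglePrime_togglePrime hp (squarefree_of_mem_divisors_filter_moebius
        (neg_ne_zero.mpr one_ne_zero) hd)⟩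
  refine ⟨togglePrime p, hinv.bijOn
    (fun d hd => togglePrime_mem_divisors_filter_moebius hp hpn one_ne_zero hd)
    (fun d hd => neg_neg (1 : ℤ) ▸ togglePrime_mem_divisors_filter_moebius hp hpn
      (neg_ne_zero.mpr one_ne_zero) hd), fun d hd => ?_⟩
  exact (rad_div_togglePrime hp hpn (squarefree_of_mem_divisors_filter_moebius one_ne_zero hd)
    (Nat.dvd_of_mem_divisors (Finset.mem_filter.mp hd).1)).symm

theorem stmt8 (n : ℕ) (hn : 1 < n) (h : ¬ Squarefree n) :
    ∃ f : ℕ → ℕ,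
      Set.BijOn f ↑(n.divisors.filter (fun d => moebius d = 1))
        ↑(n.divisors.filter (fun d => moebius d = -1)) ∧
      ∀ d ∈ n.divisors.filter (fun d => moebius d = 1), rad (n / d) = rad (n / f d) :=
  stmt8_general n h
end

section
/- For a squarefree integer n = p_1 p_2 ⋯ p_r with primes p_1 < p_2 < ⋯ < p_r and r ≥ 2, we have ∑_{d∣n} μ(d) s_{n/d} = (-1)^{r-1} p_r, where s_1 = 0 and s_m is the smallest prime factor of m for m > 1. Hence the smallest-prime-factor sequence fails the Gauss congruence at every composite squarefree n. -/
/-!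
Write `n = m p` with `p` the largest prime factor of `n`. The divisors of `n` are the `d` and
`d p` with `d ∣ m`, so the Möbius sum becomes `∑_{d ∣ m} μ(d) (s_{(m/d) p} - s_{m/d})`. Every
prime factor of `m` is smaller than `p`, hence `s_{e p} = s_e` for `e ≠ 1`, and only `d = m`
survives, contributing `μ(m) p = (-1)^(r-1) p`. Since `m > 1`, we have `0 < p < n`, so `n ∤ ±p`.
-/

open ArithmeticFunction

/-- The smallest-prime-factor sequence, with `spf 1 = 0`. -/
def spf (n : ℕ) : ℕ := if n = 1 then 0 else n.minFac

/-- The greatest-prime-factor sequence, with `gpf 1 = 0`. -/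
def gpf (n : ℕ) : ℕ := if n = 1 then 0 else n.primeFactors.sup _root_.id

theorem moebius_eq_neg_one_pow_card_primeFactors {n : ℕ} (hn : Squarefree n) :
    moebius n = (-1) ^ n.primeFactors.card := by
  rw [← isMultiplicative_moebius.prod_primeFactors hn,
    Finset.prod_congr rfl fun q hq => moebius_apply_prime (Nat.prime_of_mem_primeFactors hq),
    Finset.prod_const]

theorem sum_divisors_mul_prime_moebius_mul (f : ℕ → ℤ) {m p : ℕ} (hp : p.Prime)
    (hpm : ¬ p ∣ m) :
    ∑ d ∈ (m * p).divisors, moebius d * f (m * p / d) =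
      ∑ d ∈ m.divisors, moebius d * (f (m / d * p) - f (m / d)) := by
  have hcop : m.Coprime p := (hp.coprime_iff_not_dvd.2 hpm).symm
  rw [Nat.divisors_mul, Finset.mul_def, Finset.sum_image hcop.mul_injOn_divisors,
    Finset.sum_product, hp.divisors]
  refine Finset.sum_congr rfl fun d hd => ?_
  have hdm : d ∣ m := Nat.dvd_of_mem_divisors hd
  rw [Finset.sum_pair hp.one_lt.ne, mul_one, Nat.mul_div_mul_right _ _ hp.pos,
    Nat.div_mul_right_comm hdm,
    isMultiplicative_moebius.map_mul_of_coprime (hcop.coprime_dvd_left hdm),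
    moebius_apply_prime hp]
  ring

theorem Nat.minFac_mul_prime_of_minFac_le {e p : ℕ} (he : e ≠ 1) (hp : p.Prime)
    (hle : e.minFac ≤ p) : (e * p).minFac = e.minFac := by
  have hep : e * p ≠ 1 := fun h => hp.ne_one (Nat.eq_one_of_mul_eq_one_left h)
  refine le_antisymm
    (Nat.minFac_le_of_dvd (Nat.minFac_prime he).two_le ((Nat.minFac_dvd e).mul_right p)) ?_
  have hq := Nat.minFac_prime hep
  rcases hq.dvd_mul.mp (Nat.minFac_dvd (e * p)) with hqe | hqp
  · exact Nat.minFac_le_of_dvd hq.two_le hqe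
  · rwa [(Nat.prime_dvd_prime_iff_eq hq hp).mp hqp]

theorem spf_mul_prime_of_minFac_le {e p : ℕ} (he : e ≠ 1) (hp : p.Prime)
    (hle : e.minFac ≤ p) : spf (e * p) = spf e := by
  have hep : e * p ≠ 1 := fun h => hp.ne_one (Nat.eq_one_of_mul_eq_one_left h)
  simp only [spf, if_neg hep, if_neg he, Nat.minFac_mul_prime_of_minFac_le he hp hle]

theorem sum_divisors_mul_prime_moebius_mul_spf {m p : ℕ} (hm : m ≠ 0) (hp : p.Prime)
    (hlt : ∀ q ∈ m.primeFactors, q < p) :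
    ∑ d ∈ (m * p).divisors, moebius d * (spf (m * p / d) : ℤ) = moebius m * p := by
  have hpm : ¬ p ∣ m := fun h => (hlt p (Nat.mem_primeFactors.mpr ⟨hp, h, hm⟩)).false
  rw [sum_divisors_mul_prime_moebius_mul (fun k => (spf k : ℤ)) hp hpm,
    Finset.sum_eq_single m _ (fun h => absurd (Nat.mem_divisors_self m hm) h)]
  · simp [Nat.div_self (Nat.pos_of_ne_zero hm), spf, hp.ne_one, hp.minFac_eq]
  intro d hd hdm
  have hd' := Nat.mem_divisors.mp hd
  have hq1 : m / d ≠ 1 := fun h => hdm (Nat.eq_of_dvd_of_div_eq_one hd'.1 h)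
  have hmin : (m / d).minFac ∈ m.primeFactors :=
    Nat.mem_primeFactors.mpr ⟨Nat.minFac_prime hq1,
      (Nat.minFac_dvd _).trans (Nat.div_dvd_of_dvd hd'.1), hm⟩
  rw [spf_mul_prime_of_minFac_le hq1 hp (hlt _ hmin).le, sub_self, mul_zero]

theorem gpf_mem_primeFactors {n : ℕ} (hn : 1 < n) : gpf n ∈ n.primeFactors := by
  obtain ⟨q, hq, hsup⟩ := Finset.exists_mem_eq_sup _ (Nat.nonempty_primeFactors.mpr hn) id
  rwa [gpf, if_neg hn.ne', hsup]

theorem le_gpf_of_mem_primeFactors {n q : ℕ} (hq : q ∈ n.primeFactors) : q ≤ gpf n := by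
  have hn : n ≠ 1 := by rintro rfl; simp at hq
  rw [gpf, if_neg hn]
  exact Finset.le_sup (f := id) hq

theorem Squarefree.lt_gpf_of_mem_primeFactors_div_gpf {n q : ℕ} (hsq : Squarefree n)
    (hn : 1 < n) (hq : q ∈ (n / gpf n).primeFactors) : q < gpf n := by
  have hpn := Nat.dvd_of_mem_primeFactors (gpf_mem_primeFactors hn)
  have hqn : q ∈ n.primeFactors :=
    Nat.primeFactors_mono (Nat.div_dvd_of_dvd hpn) hsq.ne_zero hq
  refine (le_gpf_of_mem_primeFactors hqn).lt_of_ne fun hqp => ?_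
  have hpp := Nat.dvd_of_mem_primeFactors hq
  rw [hqp] at hpp
  exact (Nat.prime_of_mem_primeFactors (gpf_mem_primeFactors hn)).not_isUnit
    (hsq _ (Nat.mul_dvd_of_dvd_div hpn hpp))

theorem stmt14 (n : ℕ) (hsq : Squarefree n) (hr : 2 ≤ n.primeFactors.card) :
    (∑ d ∈ n.divisors, moebius d * (spf (n / d) : ℤ)) =
      (-1) ^ (n.primeFactors.card - 1) * (gpf n : ℤ) ∧
    ¬ (n : ℤ) ∣ ∑ d ∈ n.divisors, moebius d * (spf (n / d) : ℤ) := by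
  have hn : 1 < n := Nat.nonempty_primeFactors.mp (Finset.card_pos.mp (by omega))
  have hpn := gpf_mem_primeFactors hn
  have hp := Nat.prime_of_mem_primeFactors hpn
  set m := n / gpf n
  have hmp : m * gpf n = n := Nat.div_mul_cancel (Nat.dvd_of_mem_primeFactors hpn)
  have hm0 : m ≠ 0 := fun h => hsq.ne_zero (by rw [← hmp, h, zero_mul])
  have hlt : ∀ q ∈ m.primeFactors, q < gpf n :=
    fun q hq => hsq.lt_gpf_of_mem_primeFactors_div_gpf hn hq
  have hcard : m.primeFactors.card + 1 = n.primeFactors.card := by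
    rw [← hmp, Nat.primeFactors_mul hm0 hp.ne_zero, hp.primeFactors,
      Finset.card_union_of_disjoint (Finset.disjoint_singleton_right.mpr (hlt _ · |>.false)),
      Finset.card_singleton]
  have hsum := sum_divisors_mul_prime_moebius_mul_spf hm0 hp hlt
  rw [hmp, moebius_eq_neg_one_pow_card_primeFactors
    (hsq.squarefree_of_dvd (Nat.div_dvd_of_dvd (Nat.dvd_of_mem_primeFactors hpn))),
    show m.primeFactors.card = n.primeFactors.card - 1 by omega] at hsum
  refine ⟨hsum, fun hdvd => ?_⟩
  rw [hsum, IsUnit.dvd_mul_left (isUnit_neg_one.pow _), Int.natCast_dvd_natCast] at hdvd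
  have hm1 : 1 < m := Nat.nonempty_primeFactors.mp (Finset.card_pos.mp (by omega))
  have hp_lt : gpf n < n := (lt_mul_of_one_lt_left hp.pos hm1).trans_eq hmp
  exact hp_lt.not_ge (Nat.le_of_dvd hp.pos hdvd)
end
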